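/- arXiv:1605.03322 — 5 statements merged into one kernel-verified Lean document; each statement's English description precedes it below -/
import Mathlib

section
/- The set S₁ × [4] ⊆ ℤ³, where S₁ = {(1,1),(1,2),(2,2)} and [4] = {1,2,3,4}, can be partitioned into three 4-element subsets B of ℤ³ each of which can be ordered as v₁,v₂,v₃,v₄ so that the multiset of consecutive differences {v₂−v₁, v₃−v₂, v₄−v₃} equals {(1,0,0),(0,1,0),(0,0,1)}. -/
/-! The three blocks are the monotone lattice paths starting at `(1,1,1)`, `(1,1,2)` and
`(1,1,3)` that take their unit steps in the orders `e₂ e₁ e₃`, `e₂ e₃ e₁` and `e₃ e₂ e₁`;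
that they tile `S₁ × [4]` is a finite computation. -/

def walkVertices {G : Type*} [Add G] [DecidableEq G] (v d₁ d₂ d₃ : G) : Finset G :=
  {v, v + d₁, v + d₁ + d₂, v + d₁ + d₂ + d₃}

theorem exists_vertices_of_card_walkVertices {G : Type*} [AddCommGroup G] [DecidableEq G]
    {v d₁ d₂ d₃ : G} {D : Multiset G} (hcard : (walkVertices v d₁ d₂ d₃).card = 4)
    (hD : ({d₁, d₂, d₃} : Multiset G) = D) :
    ∃ v₁ v₂ v₃ v₄ : G, (walkVertices v d₁ d₂ d₃ : Set G) = {v₁, v₂, v₃, v₄} ∧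
      (walkVertices v d₁ d₂ d₃ : Set G).ncard = 4 ∧
      ({v₂ - v₁, v₃ - v₂, v₄ - v₃} : Multiset G) = D :=
  ⟨v, v + d₁, v + d₁ + d₂, v + d₁ + d₂ + d₃, by simp [walkVertices],
    by rw [Set.ncard_coe_finset, hcard], by simpa only [add_sub_cancel_left] using hD⟩

theorem setOf_mem_product_eq_coe_map_prodAssoc {α β γ : Type*} (S : Finset (α × β))
    (T : Finset γ) :
    {v : α × β × γ | (v.1, v.2.1) ∈ (S : Set (α × β)) ∧ v.2.2 ∈ (T : Set γ)} =
      ((S ×ˢ T).map (Equiv.prodAssoc α β γ).toEmbedding : Set (α × β × γ)) := by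
  ext v
  rw [Finset.mem_coe, Finset.mem_map_equiv]
  simp

def threeBlocks : Fin 3 → Finset (ℤ × ℤ × ℤ) :=
  ![walkVertices (1, 1, 1) (0, 1, 0) (1, 0, 0) (0, 0, 1),
    walkVertices (1, 1, 2) (0, 1, 0) (0, 0, 1) (1, 0, 0),
    walkVertices (1, 1, 3) (0, 0, 1) (0, 1, 0) (1, 0, 0)]

theorem disjoint_threeBlocks : ∀ i j, i ≠ j → Disjoint (threeBlocks i) (threeBlocks j) := by
  decide

theorem biUnion_threeBlocks :
    Finset.univ.biUnion threeBlocks =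
      (({(1, 1), (1, 2), (2, 2)} : Finset (ℤ × ℤ)) ×ˢ Finset.Icc (1 : ℤ) 4).map
        (Equiv.prodAssoc ℤ ℤ ℤ).toEmbedding := by
  decide

/-- S₁ × [4] with S₁ = {(1,1),(1,2),(2,2)} can be partitioned into
three (e₁,e₂,e₃)-blocks. -/
theorem stmt_0 :
    ∃ B : Fin 3 → Set (ℤ × ℤ × ℤ),
      (∀ i, ∃ v₁ v₂ v₃ v₄ : ℤ × ℤ × ℤ,
        B i = {v₁, v₂, v₃, v₄} ∧ (B i).ncard = 4 ∧
        ({v₂ - v₁, v₃ - v₂, v₄ - v₃} : Multiset (ℤ × ℤ × ℤ)) =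
          {(1,0,0), (0,1,0), (0,0,1)}) ∧
      (∀ i j, i ≠ j → Disjoint (B i) (B j)) ∧
      (⋃ i, B i) = {v : ℤ × ℤ × ℤ |
        (v.1, v.2.1) ∈ ({(1,1),(1,2),(2,2)} : Set (ℤ × ℤ)) ∧ v.2.2 ∈ Set.Icc (1:ℤ) 4} := by
  refine ⟨fun i ↦ threeBlocks i, fun i ↦ ?_, fun i j hij ↦ ?_, ?_⟩
  · fin_cases i <;> exact exists_vertices_of_card_walkVertices (by decide) (by decide)
  · exact Finset.disjoint_coe.2 (disjoint_threeBlocks i j hij)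
  · rw [← Finset.coe_Icc, ← Finset.coe_singleton, ← Finset.coe_insert, ← Finset.coe_insert,
      setOf_mem_product_eq_coe_map_prodAssoc, ← biUnion_threeBlocks, Finset.coe_biUnion,
      Finset.coe_univ, Set.biUnion_univ]
end

section
/- For every integer k ≥ 2, the set ([k] × [4]) × [20] ⊆ ℤ³ can be partitioned into (e₁,e₂,e₃)-blocks. -/
set_option maxHeartbeats 1000000
set_option maxRecDepth 100000

private def Box (a b : ℤ×ℤ×ℤ) : Set (ℤ×ℤ×ℤ) :=
  {v | v.1 ∈ Set.Icc a.1 b.1 ∧ v.2.1 ∈ Set.Icc a.2.1 b.2.1 ∧ v.2.2 ∈ Set.Icc a.2.2 b.2.2}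

private def IsBlock (B : Set (ℤ×ℤ×ℤ)) : Prop := ∃ v₁ v₂ v₃ v₄ : ℤ×ℤ×ℤ,
  B = {v₁,v₂,v₃,v₄} ∧ B.ncard = 4 ∧
  ({v₂-v₁, v₃-v₂, v₄-v₃} : Multiset (ℤ×ℤ×ℤ)) = {(1,0,0),(0,1,0),(0,0,1)}

private def Tiles (P : Set (Set (ℤ×ℤ×ℤ))) (S : Set (ℤ×ℤ×ℤ)) : Prop :=
  P.PairwiseDisjoint id ∧ ⋃₀ P = S ∧ ∀ B ∈ P, IsBlock B

private lemma ncard4 (a b c d : ℤ×ℤ×ℤ) (h1 : a ≠ b) (h2 : a ≠ c) (h3 : a ≠ d)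
    (h4 : b ≠ c) (h5 : b ≠ d) (h6 : c ≠ d) : ({a,b,c,d} : Set (ℤ×ℤ×ℤ)).ncard = 4 := by
  rw [Set.ncard_insert_of_notMem (by simp [h1,h2,h3]),
      Set.ncard_insert_of_notMem (by simp [h4,h5]),
      Set.ncard_insert_of_notMem (by simp [h6]), Set.ncard_singleton]

private lemma isBlock_mk (v₁ v₂ v₃ v₄ : ℤ×ℤ×ℤ) (h1 : v₁ ≠ v₂) (h2 : v₁ ≠ v₃) (h3 : v₁ ≠ v₄)
    (h4 : v₂ ≠ v₃) (h5 : v₂ ≠ v₄) (h6 : v₃ ≠ v₄)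
    (hm : ({v₂-v₁, v₃-v₂, v₄-v₃} : Multiset (ℤ×ℤ×ℤ)) = {(1,0,0),(0,1,0),(0,0,1)}) :
    IsBlock {v₁,v₂,v₃,v₄} :=
  ⟨v₁,v₂,v₃,v₄, rfl, ncard4 _ _ _ _ h1 h2 h3 h4 h5 h6, hm⟩

private lemma disj4 (a₁ a₂ a₃ a₄ b₁ b₂ b₃ b₄ : ℤ×ℤ×ℤ)
    (h : ∀ x ∈ [a₁,a₂,a₃,a₄], x ∉ [b₁,b₂,b₃,b₄]) :
    Disjoint ({a₁,a₂,a₃,a₄} : Set (ℤ×ℤ×ℤ)) {b₁,b₂,b₃,b₄} := by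
  rw [Set.disjoint_left]
  intro x hx hx'
  exact h x (by simpa using hx) (by simpa using hx')

private def trX (t : ℤ×ℤ×ℤ) (B : Set (ℤ×ℤ×ℤ)) : Set (ℤ×ℤ×ℤ) := (t + ·) '' B

private lemma trans_box (t a b : ℤ×ℤ×ℤ) : trX t (Box a b) = Box (t+a) (t+b) := by
  obtain ⟨t1,t2,t3⟩ := t; obtain ⟨a1,a2,a3⟩ := a; obtain ⟨b1,b2,b3⟩ := b
  ext ⟨x,y,z⟩
  simp only [trX, Set.mem_image, Box, Set.mem_setOf_eq, Set.mem_Icc, Prod.exists,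
    Prod.mk_add_mk, Prod.mk.injEq]
  constructor
  · rintro ⟨p,q,r, h, rfl, rfl, rfl⟩; omega
  · rintro h; exact ⟨x - t1, y - t2, z - t3, by omega, by ring, by ring, by ring⟩

private lemma Tiles.trX' {P : Set (Set (ℤ×ℤ×ℤ))} {S : Set (ℤ×ℤ×ℤ)} (h : Tiles P S)
    (t : ℤ×ℤ×ℤ) : Tiles (trX t '' P) (trX t S) := by
  obtain ⟨hpd, hU, hblk⟩ := h
  refine ⟨?_, ?_, ?_⟩
  · rintro B' ⟨B, hB, rfl⟩ C' ⟨C, hC, rfl⟩ hne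
    have hBC : B ≠ C := fun e => hne (by rw [e])
    have hd := hpd hB hC hBC
    simp only [Function.onFun, id_eq] at hd ⊢
    exact (Set.disjoint_image_iff (add_right_injective t)).2 hd
  · rw [← hU]
    show ⋃₀ (Set.image (t + ·) '' P) = (t + ·) '' (⋃₀ P)
    exact Set.image_sUnion.symm
  · rintro B' ⟨B, hB, rfl⟩
    obtain ⟨v₁,v₂,v₃,v₄, rfl, hc, hm⟩ := hblk B hB
    refine ⟨t+v₁, t+v₂, t+v₃, t+v₄, ?_, ?_, ?_⟩
    · show (t + ·) '' _ = _
      simp only [Set.image_insert_eq, Set.image_singleton]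
    · show ((t + ·) '' _).ncard = 4
      rw [Set.ncard_image_of_injective _ (add_right_injective t)]
      exact hc
    · simpa only [add_sub_add_left_eq_sub] using hm

private lemma Tiles.union {P Q : Set (Set (ℤ×ℤ×ℤ))} {S T : Set (ℤ×ℤ×ℤ)}
    (hP : Tiles P S) (hQ : Tiles Q T) (hST : Disjoint S T) : Tiles (P ∪ Q) (S ∪ T) := by
  obtain ⟨p1,p2,p3⟩ := hP; obtain ⟨q1,q2,q3⟩ := hQ
  have hPS : ∀ B ∈ P, B ⊆ S := fun B hB => p2 ▸ Set.subset_sUnion_of_mem hB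
  have hQT : ∀ B ∈ Q, B ⊆ T := fun B hB => q2 ▸ Set.subset_sUnion_of_mem hB
  refine ⟨?_, ?_, ?_⟩
  · intro B hB C hC hne
    simp only [Function.onFun, id_eq]
    rcases hB with hB|hB <;> rcases hC with hC|hC
    · exact p1 hB hC hne
    · exact hST.mono (hPS B hB) (hQT C hC)
    · exact hST.symm.mono (hQT B hB) (hPS C hC)
    · exact q1 hB hC hne
  · rw [Set.sUnion_union, p2, q2]
  · intro B hB
    rcases hB with hB|hB
    exacts [p3 B hB, q3 B hB]

private def P2 : Set (Set (ℤ×ℤ×ℤ)) :=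
  {{((1:ℤ),1,1), ((2:ℤ),1,1), ((2:ℤ),1,2), ((2:ℤ),2,2)},
   {((1:ℤ),1,2), ((1:ℤ),2,2), ((1:ℤ),2,3), ((2:ℤ),2,3)},
   {((1:ℤ),1,3), ((2:ℤ),1,3), ((2:ℤ),1,4), ((2:ℤ),2,4)},
   {((1:ℤ),1,4), ((1:ℤ),1,5), ((2:ℤ),1,5), ((2:ℤ),2,5)},
   {((1:ℤ),2,1), ((2:ℤ),2,1), ((2:ℤ),3,1), ((2:ℤ),3,2)},
   {((1:ℤ),2,4), ((1:ℤ),2,5), ((1:ℤ),3,5), ((2:ℤ),3,5)},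
   {((1:ℤ),3,1), ((1:ℤ),4,1), ((2:ℤ),4,1), ((2:ℤ),4,2)},
   {((1:ℤ),3,2), ((1:ℤ),4,2), ((1:ℤ),4,3), ((2:ℤ),4,3)},
   {((1:ℤ),3,3), ((2:ℤ),3,3), ((2:ℤ),3,4), ((2:ℤ),4,4)},
   {((1:ℤ),3,4), ((1:ℤ),4,4), ((1:ℤ),4,5), ((2:ℤ),4,5)}}

private lemma P2_pd : P2.PairwiseDisjoint id := by
  intro B hB C hC hne
  simp only [P2, Set.mem_insert_iff, Set.mem_singleton_iff] at hB hC
  simp only [Function.onFun, id_eq]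
  rcases hB with rfl|rfl|rfl|rfl|rfl|rfl|rfl|rfl|rfl|rfl <;> rcases hC with rfl|rfl|rfl|rfl|rfl|rfl|rfl|rfl|rfl|rfl <;>
    first
      | exact absurd rfl hne
      | exact disj4 _ _ _ _ _ _ _ _ (by decide)

private lemma P2_un : ⋃₀ P2 = Box (1,1,1) (2,4,5) := by
  have hb : Box (1,1,1) ((2:ℤ),4,5)
      = ↑(Finset.Icc (1:ℤ) 2 ×ˢ Finset.Icc (1:ℤ) 4 ×ˢ Finset.Icc (1:ℤ) 5) := by
    ext ⟨x,y,z⟩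
    simp [Box, Finset.mem_Icc, Prod.le_def]
    tauto
  unfold P2
  repeat rw [Set.sUnion_insert]
  rw [Set.sUnion_singleton, hb]
  simp only [← Finset.coe_singleton, ← Finset.coe_insert, ← Finset.coe_union]
  rw [Finset.coe_inj]
  decide

private lemma P2_blk : ∀ B ∈ P2, IsBlock B := by
  intro B hB
  simp only [P2, Set.mem_insert_iff, Set.mem_singleton_iff] at hB
  rcases hB with rfl|rfl|rfl|rfl|rfl|rfl|rfl|rfl|rfl|rfl <;>
    exact isBlock_mk _ _ _ _ (by decide) (by decide) (by decide) (by decide)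
      (by decide) (by decide) (by decide)

private lemma base_P2 : Tiles P2 (Box (1,1,1) (2,4,5)) :=
  ⟨P2_pd, P2_un, P2_blk⟩

private def P3 : Set (Set (ℤ×ℤ×ℤ)) :=
  {{((1:ℤ),1,1), ((1:ℤ),2,1), ((2:ℤ),2,1), ((2:ℤ),2,2)},
   {((1:ℤ),1,2), ((1:ℤ),1,3), ((2:ℤ),1,3), ((2:ℤ),2,3)},
   {((1:ℤ),1,4), ((1:ℤ),1,5), ((2:ℤ),1,5), ((2:ℤ),2,5)},
   {((1:ℤ),2,2), ((1:ℤ),2,3), ((1:ℤ),3,3), ((2:ℤ),3,3)},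
   {((1:ℤ),2,4), ((1:ℤ),2,5), ((1:ℤ),3,5), ((2:ℤ),3,5)},
   {((1:ℤ),3,1), ((1:ℤ),4,1), ((2:ℤ),4,1), ((2:ℤ),4,2)},
   {((1:ℤ),3,2), ((1:ℤ),4,2), ((1:ℤ),4,3), ((2:ℤ),4,3)},
   {((1:ℤ),3,4), ((1:ℤ),4,4), ((1:ℤ),4,5), ((2:ℤ),4,5)},
   {((2:ℤ),1,1), ((3:ℤ),1,1), ((3:ℤ),2,1), ((3:ℤ),2,2)},
   {((2:ℤ),1,2), ((3:ℤ),1,2), ((3:ℤ),1,3), ((3:ℤ),2,3)},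
   {((2:ℤ),1,4), ((3:ℤ),1,4), ((3:ℤ),1,5), ((3:ℤ),2,5)},
   {((2:ℤ),2,4), ((3:ℤ),2,4), ((3:ℤ),3,4), ((3:ℤ),3,5)},
   {((2:ℤ),3,1), ((3:ℤ),3,1), ((3:ℤ),4,1), ((3:ℤ),4,2)},
   {((2:ℤ),3,2), ((3:ℤ),3,2), ((3:ℤ),3,3), ((3:ℤ),4,3)},
   {((2:ℤ),3,4), ((2:ℤ),4,4), ((3:ℤ),4,4), ((3:ℤ),4,5)}}

private lemma P3_pd : P3.PairwiseDisjoint id := by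
  intro B hB C hC hne
  simp only [P3, Set.mem_insert_iff, Set.mem_singleton_iff] at hB hC
  simp only [Function.onFun, id_eq]
  rcases hB with rfl|rfl|rfl|rfl|rfl|rfl|rfl|rfl|rfl|rfl|rfl|rfl|rfl|rfl|rfl <;> rcases hC with rfl|rfl|rfl|rfl|rfl|rfl|rfl|rfl|rfl|rfl|rfl|rfl|rfl|rfl|rfl <;>
    first
      | exact absurd rfl hne
      | exact disj4 _ _ _ _ _ _ _ _ (by decide)

private lemma P3_un : ⋃₀ P3 = Box (1,1,1) (3,4,5) := by
  have hb : Box (1,1,1) ((3:ℤ),4,5)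
      = ↑(Finset.Icc (1:ℤ) 3 ×ˢ Finset.Icc (1:ℤ) 4 ×ˢ Finset.Icc (1:ℤ) 5) := by
    ext ⟨x,y,z⟩
    simp [Box, Finset.mem_Icc, Prod.le_def]
    tauto
  unfold P3
  repeat rw [Set.sUnion_insert]
  rw [Set.sUnion_singleton, hb]
  simp only [← Finset.coe_singleton, ← Finset.coe_insert, ← Finset.coe_union]
  rw [Finset.coe_inj]
  decide

private lemma P3_blk : ∀ B ∈ P3, IsBlock B := by
  intro B hB
  simp only [P3, Set.mem_insert_iff, Set.mem_singleton_iff] at hB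
  rcases hB with rfl|rfl|rfl|rfl|rfl|rfl|rfl|rfl|rfl|rfl|rfl|rfl|rfl|rfl|rfl <;>
    exact isBlock_mk _ _ _ _ (by decide) (by decide) (by decide) (by decide)
      (by decide) (by decide) (by decide)

private lemma base_P3 : Tiles P3 (Box (1,1,1) (3,4,5)) :=
  ⟨P3_pd, P3_un, P3_blk⟩

private lemma tile_n : ∀ n : ℕ, ∃ P, Tiles P (Box (1,1,1) ((n:ℤ)+2,4,5)) := by
  intro n
  induction n using Nat.strong_induction_on with
  | _ n ih =>
    match n with
    | 0 =>
      refine ⟨P2, ?_⟩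
      have e : ((0:ℕ):ℤ) + 2 = 2 := by norm_num
      rw [e]; exact base_P2
    | 1 =>
      refine ⟨P3, ?_⟩
      have e : ((1:ℕ):ℤ) + 2 = 3 := by norm_num
      rw [e]; exact base_P3
    | (m+2) =>
      obtain ⟨P, hP⟩ := ih m (by omega)
      refine ⟨P ∪ (trX ((m:ℤ)+2,0,0) '' P2), ?_⟩
      have h2 := base_P2.trX' ((m:ℤ)+2,0,0)
      rw [trans_box] at h2
      simp only [Prod.mk_add_mk] at h2
      have hd : Disjoint (Box (1,1,1) ((m:ℤ)+2,4,5))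
          (Box ((m:ℤ)+2+1,0+1,0+1) ((m:ℤ)+2+2,0+4,0+5)) := by
        rw [Set.disjoint_left]
        rintro ⟨x,y,z⟩ h1 h2
        simp only [Box, Set.mem_setOf_eq, Set.mem_Icc] at h1 h2
        omega
      have hU := hP.union h2 hd
      have he : Box (1,1,1) ((m:ℤ)+2,4,5) ∪ Box ((m:ℤ)+2+1,0+1,0+1) ((m:ℤ)+2+2,0+4,0+5)
          = Box (1,1,1) (((m+2:ℕ):ℤ)+2,4,5) := by
        ext ⟨x,y,z⟩
        simp only [Box, Set.mem_union, Set.mem_setOf_eq, Set.mem_Icc]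
        push_cast
        omega
      rwa [he] at hU

private lemma tile_slab (k : ℤ) (hk : 2 ≤ k) : ∃ P, Tiles P (Box (1,1,1) (k,4,5)) := by
  obtain ⟨P, hP⟩ := tile_n (k-2).toNat
  have e : ((k-2).toNat : ℤ) + 2 = k := by omega
  rw [e] at hP
  exact ⟨P, hP⟩

private lemma tile_k (k : ℤ) (hk : 2 ≤ k) : ∃ P, Tiles P (Box (1,1,1) (k,4,20)) := by
  obtain ⟨P, hP⟩ := tile_slab k hk
  have h5 := hP.trX' (0,0,5)
  have h10 := hP.trX' (0,0,10)
  have h15 := hP.trX' (0,0,15)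
  rw [trans_box] at h5 h10 h15
  have e5 : ((0:ℤ),(0:ℤ),(5:ℤ)) + (1,1,1) = ((1:ℤ),(1:ℤ),(6:ℤ)) := by decide
  have f5 : ((0:ℤ),(0:ℤ),(5:ℤ)) + (k,4,5) = (k,(4:ℤ),(10:ℤ)) := by
    simp only [Prod.mk_add_mk]; norm_num
  have e10 : ((0:ℤ),(0:ℤ),(10:ℤ)) + (1,1,1) = ((1:ℤ),(1:ℤ),(11:ℤ)) := by decide
  have f10 : ((0:ℤ),(0:ℤ),(10:ℤ)) + (k,4,5) = (k,(4:ℤ),(15:ℤ)) := by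
    simp only [Prod.mk_add_mk]; norm_num
  have e15 : ((0:ℤ),(0:ℤ),(15:ℤ)) + (1,1,1) = ((1:ℤ),(1:ℤ),(16:ℤ)) := by decide
  have f15 : ((0:ℤ),(0:ℤ),(15:ℤ)) + (k,4,5) = (k,(4:ℤ),(20:ℤ)) := by
    simp only [Prod.mk_add_mk]; norm_num
  rw [e5, f5] at h5
  rw [e10, f10] at h10
  rw [e15, f15] at h15
  have d1 : Disjoint (Box (1,1,1) (k,4,5)) (Box (1,1,6) (k,4,10)) := by
    rw [Set.disjoint_left]; rintro ⟨x,y,z⟩ h1 h2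
    simp only [Box, Set.mem_setOf_eq, Set.mem_Icc] at h1 h2; omega
  have hU1 := hP.union h5 d1
  have d2 : Disjoint (Box (1,1,1) (k,4,5) ∪ Box (1,1,6) (k,4,10)) (Box (1,1,11) (k,4,15)) := by
    rw [Set.disjoint_left]; rintro ⟨x,y,z⟩ h1 h2
    simp only [Box, Set.mem_union, Set.mem_setOf_eq, Set.mem_Icc] at h1 h2; omega
  have hU2 := hU1.union h10 d2
  have d3 : Disjoint ((Box (1,1,1) (k,4,5) ∪ Box (1,1,6) (k,4,10)) ∪ Box (1,1,11) (k,4,15))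
      (Box (1,1,16) (k,4,20)) := by
    rw [Set.disjoint_left]; rintro ⟨x,y,z⟩ h1 h2
    simp only [Box, Set.mem_union, Set.mem_setOf_eq, Set.mem_Icc] at h1 h2; omega
  have hU3 := hU2.union h15 d3
  have he : ((Box (1,1,1) (k,4,5) ∪ Box (1,1,6) (k,4,10)) ∪ Box (1,1,11) (k,4,15))
      ∪ Box (1,1,16) (k,4,20) = Box (1,1,1) (k,4,20) := by
    ext ⟨x,y,z⟩
    simp only [Box, Set.mem_union, Set.mem_setOf_eq, Set.mem_Icc]
    omega
  rw [he] at hU3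
  exact ⟨_, hU3⟩

/-- for every k ≥ 2, [k] × [4] × [20] can be partitioned into
(e₁,e₂,e₃)-blocks. -/
theorem stmt_3 (k : ℤ) (hk : 2 ≤ k) :
    ∃ P : Set (Set (ℤ × ℤ × ℤ)),
      P.PairwiseDisjoint id ∧
      ⋃₀ P = {v : ℤ × ℤ × ℤ |
        v.1 ∈ Set.Icc (1:ℤ) k ∧ v.2.1 ∈ Set.Icc (1:ℤ) 4 ∧ v.2.2 ∈ Set.Icc (1:ℤ) 20} ∧
      ∀ B ∈ P, ∃ v₁ v₂ v₃ v₄ : ℤ × ℤ × ℤ,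
        B = {v₁, v₂, v₃, v₄} ∧ B.ncard = 4 ∧
        ({v₂ - v₁, v₃ - v₂, v₄ - v₃} : Multiset (ℤ × ℤ × ℤ)) =
          {(1,0,0), (0,1,0), (0,0,1)} := by
  obtain ⟨P, hP⟩ := tile_k k hk
  exact ⟨P, hP.1, hP.2.1, hP.2.2⟩
end

section
/- The set S₆ × [4] ⊆ ℤ³, where S₆ = ({1,2} × {1,2,3,4}) ∪ {(3,4)}, can be partitioned into nine (e₁,e₂,e₃)-blocks. -/
private def F : Fin 9 → Finset (ℤ × ℤ × ℤ)
  | 0 => {(1,1,1), (2,1,1), (2,2,1), (2,2,2)}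
  | 1 => {(1,1,2), (2,1,2), (2,1,3), (2,2,3)}
  | 2 => {(1,1,3), (1,1,4), (2,1,4), (2,2,4)}
  | 3 => {(1,2,1), (1,2,2), (1,3,2), (2,3,2)}
  | 4 => {(1,2,3), (1,2,4), (1,3,4), (2,3,4)}
  | 5 => {(1,3,1), (1,4,1), (1,4,2), (2,4,2)}
  | 6 => {(1,3,3), (1,4,3), (1,4,4), (2,4,4)}
  | 7 => {(2,3,1), (2,4,1), (3,4,1), (3,4,2)}
  | 8 => {(2,3,3), (2,4,3), (3,4,3), (3,4,4)}

/-- S₆ × [4], where S₆ = ({1,2} × {1,2,3,4}) ∪ {(3,4)}, can be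
partitioned into nine (e₁,e₂,e₃)-blocks. -/
theorem stmt_4 :
    ∃ B : Fin 9 → Set (ℤ × ℤ × ℤ),
      (∀ i, ∃ v₁ v₂ v₃ v₄ : ℤ × ℤ × ℤ,
        B i = {v₁, v₂, v₃, v₄} ∧ (B i).ncard = 4 ∧
        ({v₂ - v₁, v₃ - v₂, v₄ - v₃} : Multiset (ℤ × ℤ × ℤ)) =
          {(1,0,0), (0,1,0), (0,0,1)}) ∧
      (∀ i j, i ≠ j → Disjoint (B i) (B j)) ∧
      (⋃ i, B i) = {v : ℤ × ℤ × ℤ |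
        ((v.1 ∈ Set.Icc (1:ℤ) 2 ∧ v.2.1 ∈ Set.Icc (1:ℤ) 4) ∨ (v.1 = 3 ∧ v.2.1 = 4)) ∧
        v.2.2 ∈ Set.Icc (1:ℤ) 4} := by
  refine ⟨fun i => ↑(F i), ?_, ?_, ?_⟩
  · intro i
    fin_cases i
    · exact ⟨(1,1,1), (2,1,1), (2,2,1), (2,2,2), by simp [F], by
        rw [Set.ncard_coe_finset]; decide, by decide⟩
    · exact ⟨(1,1,2), (2,1,2), (2,1,3), (2,2,3), by simp [F], by
        rw [Set.ncard_coe_finset]; decide, by decide⟩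
    · exact ⟨(1,1,3), (1,1,4), (2,1,4), (2,2,4), by simp [F], by
        rw [Set.ncard_coe_finset]; decide, by decide⟩
    · exact ⟨(1,2,1), (1,2,2), (1,3,2), (2,3,2), by simp [F], by
        rw [Set.ncard_coe_finset]; decide, by decide⟩
    · exact ⟨(1,2,3), (1,2,4), (1,3,4), (2,3,4), by simp [F], by
        rw [Set.ncard_coe_finset]; decide, by decide⟩
    · exact ⟨(1,3,1), (1,4,1), (1,4,2), (2,4,2), by simp [F], by
        rw [Set.ncard_coe_finset]; decide, by decide⟩
    · exact ⟨(1,3,3), (1,4,3), (1,4,4), (2,4,4), by simp [F], by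
        rw [Set.ncard_coe_finset]; decide, by decide⟩
    · exact ⟨(2,3,1), (2,4,1), (3,4,1), (3,4,2), by simp [F], by
        rw [Set.ncard_coe_finset]; decide, by decide⟩
    · exact ⟨(2,3,3), (2,4,3), (3,4,3), (3,4,4), by simp [F], by
        rw [Set.ncard_coe_finset]; decide, by decide⟩
  · intro i j hij
    rw [Finset.disjoint_coe]
    revert hij
    revert i j
    decide
  · ext ⟨x, y, z⟩
    constructor
    · intro h
      simp only [Set.mem_iUnion, Finset.mem_coe] at h
      obtain ⟨i, hi⟩ := h
      simp only [Set.mem_setOf_eq, Set.mem_Icc]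
      fin_cases i <;>
        simp only [F, Finset.mem_insert, Finset.mem_singleton, Prod.mk.injEq] at hi <;>
        omega
    · intro h
      simp only [Set.mem_setOf_eq, Set.mem_Icc] at h
      simp only [Set.mem_iUnion, Finset.mem_coe]
      obtain ⟨h1 | h1, hz1, hz2⟩ := h
      · obtain ⟨⟨hx1, hx2⟩, hy1, hy2⟩ := h1
        interval_cases x <;> interval_cases y <;> interval_cases z <;> decide
      · obtain ⟨hx, hy⟩ := h1
        subst hx; subst hy
        interval_cases z <;> decide
end

section
/- The set T₅ × [2] ⊆ ℤ³, where T₅ = {(1,1),(1,2),(1,3),(2,1),(2,2),(3,1)}, can be partitioned into three (e₁, e₂−e₁, e₃)-blocks. -/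
set_option maxHeartbeats 2000000 in
/-- T₅ × [2], where T₅ = {(1,1),(1,2),(1,3),(2,1),(2,2),(3,1)}, can be
partitioned into three (e₁, e₂−e₁, e₃)-blocks. -/
theorem stmt_9 :
    ∃ B : Fin 3 → Set (ℤ × ℤ × ℤ),
      (∀ i, ∃ v₁ v₂ v₃ v₄ : ℤ × ℤ × ℤ,
        B i = {v₁, v₂, v₃, v₄} ∧ (B i).ncard = 4 ∧
        ({v₂ - v₁, v₃ - v₂, v₄ - v₃} : Multiset (ℤ × ℤ × ℤ)) =
          {(1,0,0), (-1,1,0), (0,0,1)}) ∧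
      (∀ i j, i ≠ j → Disjoint (B i) (B j)) ∧
      (⋃ i, B i) = {v : ℤ × ℤ × ℤ |
        (v.1, v.2.1) ∈ ({(1,1),(1,2),(1,3),(2,1),(2,2),(3,1)} : Set (ℤ × ℤ)) ∧
        v.2.2 ∈ Set.Icc (1:ℤ) 2} := by
  refine ⟨![{(1,1,1),(1,1,2),(2,1,2),(1,2,2)},
            {(1,2,1),(2,2,1),(1,3,1),(1,3,2)},
            {(2,1,1),(3,1,1),(3,1,2),(2,2,2)}], ?_, ?_, ?_⟩
  · intro i
    fin_cases i
    · refine ⟨(1,1,1),(1,1,2),(2,1,2),(1,2,2), rfl, ?_, by decide⟩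
      show ({(1,1,1),(1,1,2),(2,1,2),(1,2,2)} : Set (ℤ×ℤ×ℤ)).ncard = 4
      rw [show ({(1,1,1),(1,1,2),(2,1,2),(1,2,2)} : Set (ℤ×ℤ×ℤ)) =
        (↑({(1,1,1),(1,1,2),(2,1,2),(1,2,2)} : Finset (ℤ×ℤ×ℤ))) by simp,
        Set.ncard_coe_finset]
      decide
    · refine ⟨(1,2,1),(2,2,1),(1,3,1),(1,3,2), rfl, ?_, by decide⟩
      show ({(1,2,1),(2,2,1),(1,3,1),(1,3,2)} : Set (ℤ×ℤ×ℤ)).ncard = 4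
      rw [show ({(1,2,1),(2,2,1),(1,3,1),(1,3,2)} : Set (ℤ×ℤ×ℤ)) =
        (↑({(1,2,1),(2,2,1),(1,3,1),(1,3,2)} : Finset (ℤ×ℤ×ℤ))) by simp,
        Set.ncard_coe_finset]
      decide
    · refine ⟨(2,1,1),(3,1,1),(3,1,2),(2,2,2), rfl, ?_, by decide⟩
      show ({(2,1,1),(3,1,1),(3,1,2),(2,2,2)} : Set (ℤ×ℤ×ℤ)).ncard = 4
      rw [show ({(2,1,1),(3,1,1),(3,1,2),(2,2,2)} : Set (ℤ×ℤ×ℤ)) =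
        (↑({(2,1,1),(3,1,1),(3,1,2),(2,2,2)} : Finset (ℤ×ℤ×ℤ))) by simp,
        Set.ncard_coe_finset]
      decide
  · intro i j hij
    fin_cases i <;> fin_cases j <;> first
      | exact absurd rfl hij
      | (refine Set.disjoint_left.mpr ?_
         rintro ⟨x,y,z⟩ h h'
         simp [Prod.ext_iff] at h h'
         omega)
  · ext ⟨x,y,z⟩
    simp [Set.mem_iUnion, Fin.exists_fin_succ, Fin.exists_fin_two, Prod.ext_iff, Set.mem_Icc]
    omega
end

section
/- Every 3-element set of integers tiles ℤ under translations and reflections; that is, for any 3-set S ⊆ ℤ, the integers ℤ can be partitioned into sets each of which is of the form t + S or t − S for some integer t. -/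
def yF (u q' n : ℤ) : ℤ := ((n - n % 2 * u) / 2 % (3 * q')) / q'

def eF (u q' n : ℤ) : ℤ := n - n % 2 * u - 2 * q' * yF u q' n

def fF (u q' n : ℤ) : Set ℤ :=
  if n % 2 + yF u q' n ≤ 1 then {eF u q' n, eF u q' n + u, eF u q' n + 2 * q'}
  else {eF u q' n + u + 2 * q', eF u q' n + 4 * q', eF u q' n + u + 4 * q'}

lemma decode (u q' : ℤ) (hu : u % 2 = 1) (hq' : 0 < q')
    (ε y j k n : ℤ) (hε : ε = 0 ∨ ε = 1) (hy : y = 0 ∨ y = 1 ∨ y = 2)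
    (hj0 : 0 ≤ j) (hj : j < q')
    (hn : n = ε * u + 2 * q' * y + 2 * j + 6 * q' * k) :
    n % 2 = ε ∧ yF u q' n = y ∧ eF u q' n = 2 * j + 6 * q' * k := by
  have hy0 : 0 ≤ q' * y := by rcases hy with rfl | rfl | rfl <;> omega
  have hy2 : q' * y ≤ 2 * q' := by rcases hy with rfl | rfl | rfl <;> omega
  have h1 : n % 2 = ε := by
    have h : n = ε * u + 2 * (q' * y + j + 3 * q' * k) := by rw [hn]; ring
    rw [h, Int.add_mul_emod_self_left]
    rcases hε with rfl | rfl
    · simp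
    · simpa using hu
  have h2 : (n - n % 2 * u) / 2 = q' * y + j + 3 * q' * k := by
    rw [h1]
    have h : n - ε * u = 2 * (q' * y + j + 3 * q' * k) := by rw [hn]; ring
    rw [h, Int.mul_ediv_cancel_left _ two_ne_zero]
  have h3 : yF u q' n = y := by
    unfold yF
    rw [h2, show q' * y + j + 3 * q' * k = (q' * y + j) + (3 * q') * k by ring,
      Int.add_mul_emod_self_left,
      Int.emod_eq_of_lt (by linarith) (by linarith),
      show q' * y + j = j + q' * y by ring,
      Int.add_mul_ediv_left _ _ (ne_of_gt hq'),
      Int.ediv_eq_zero_of_lt hj0 hj, zero_add]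
  refine ⟨h1, h3, ?_⟩
  unfold eF
  rw [h1, h3, hn]
  ring

lemma master (u q' : ℤ) (hu : u % 2 = 1) (hq' : 0 < q') :
    (∀ n, n ∈ fF u q' n) ∧ (∀ n x, x ∈ fF u q' n → fF u q' x = fF u q' n) ∧
    (∀ n : ℤ, ∃ e : ℤ,
      fF u q' n = {e, e + u, e + 2 * q'} ∨
      fF u q' n = {e + u + 2 * q', e + 4 * q', e + u + 4 * q'}) := by
  have hq'0 : (3 : ℤ) * q' ≠ 0 := by positivity
  -- normal form decomposition of an arbitrary n
  have basic : ∀ n : ℤ, ∃ j k : ℤ, (n % 2 = 0 ∨ n % 2 = 1) ∧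
      (yF u q' n = 0 ∨ yF u q' n = 1 ∨ yF u q' n = 2) ∧
      0 ≤ j ∧ j < q' ∧
      n = n % 2 * u + 2 * q' * yF u q' n + 2 * j + 6 * q' * k := by
    intro n
    set M := (n - n % 2 * u) / 2 with hM
    set r3 := M % (3 * q') with hr3
    refine ⟨r3 % q', M / (3 * q'), by omega, ?_, Int.emod_nonneg r3 (ne_of_gt hq'),
      Int.emod_lt_of_pos r3 hq', ?_⟩
    · have hr30 : 0 ≤ r3 := Int.emod_nonneg M hq'0
      have hr3lt : r3 < 3 * q' := Int.emod_lt_of_pos M (by linarith)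
      have hyd : yF u q' n = r3 / q' := rfl
      have hy0 : 0 ≤ yF u q' n := by rw [hyd]; exact Int.ediv_nonneg hr30 (le_of_lt hq')
      have hy2 : yF u q' n ≤ 2 := by
        by_contra h
        push_neg at h
        have h3 : (3 : ℤ) ≤ r3 / q' := by omega
        have := (Int.le_ediv_iff_mul_le hq').mp h3
        linarith
      omega
    · have hyd : yF u q' n = r3 / q' := rfl
      have hsplit : q' * (r3 / q') + r3 % q' = r3 := Int.mul_ediv_add_emod r3 q'
      have hsplit2 : (3 * q') * (M / (3 * q')) + r3 = M := Int.mul_ediv_add_emod M (3 * q')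
      have heven : 2 ∣ (n - n % 2 * u) := by
        have h01 : n % 2 = 0 ∨ n % 2 = 1 := by omega
        obtain ⟨w, hw⟩ : ∃ w, u = 2 * w + 1 := ⟨u / 2, by omega⟩
        rcases h01 with h | h <;> rw [h, hw] <;> omega
      have hM2 : 2 * M = n - n % 2 * u := Int.mul_ediv_cancel' heven
      rw [hyd]
      linarith
  refine ⟨?_, ?_, ?_⟩
  · -- membership
    intro n
    obtain ⟨j, k, hε, hy, hj0, hjlt, hn⟩ := basic n
    have he : eF u q' n = 2 * j + 6 * q' * k :=
      (decode u q' hu hq' (n % 2) (yF u q' n) j k n hε hy hj0 hjlt hn).2.2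
    have claim : n = eF u q' n + n % 2 * u + 2 * q' * yF u q' n := by
      unfold eF; ring
    unfold fF
    split
    next hcond =>
      simp only [Set.mem_insert_iff, Set.mem_singleton_iff]
      rcases hε with h | h <;> rcases hy with h' | h' | h' <;>
        rw [h, h'] at claim hcond <;>
        first
          | (exfalso; omega)
          | (ring_nf at claim ⊢; tauto)
    next hcond =>
      simp only [Set.mem_insert_iff, Set.mem_singleton_iff]
      rcases hε with h | h <;> rcases hy with h' | h' | h' <;>
        rw [h, h'] at claim hcond <;>
        first
          | (exfalso; omega)
          | (ring_nf at claim ⊢; tauto)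
  · -- constancy
    intro n x hx
    obtain ⟨j, k, hε, hy, hj0, hjlt, hn⟩ := basic n
    have he : eF u q' n = 2 * j + 6 * q' * k :=
      (decode u q' hu hq' (n % 2) (yF u q' n) j k n hε hy hj0 hjlt hn).2.2
    have key : ∀ x' ε' y', (ε' = 0 ∨ ε' = 1) → (y' = 0 ∨ y' = 1 ∨ y' = 2) →
        x' = ε' * u + 2 * q' * y' + 2 * j + 6 * q' * k →
        ((ε' + y' ≤ 1) ↔ (n % 2 + yF u q' n ≤ 1)) →
        fF u q' x' = fF u q' n := by
      intro x' ε' y' hε' hy' hx' hside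
      obtain ⟨d1, d2, d3⟩ := decode u q' hu hq' ε' y' j k x' hε' hy' hj0 hjlt hx'
      unfold fF
      rw [d1, d2, d3, he]
      exact if_congr hside rfl rfl
    unfold fF at hx
    split at hx
    next hcond =>
      simp only [Set.mem_insert_iff, Set.mem_singleton_iff] at hx
      rcases hx with rfl | rfl | rfl
      · exact key _ 0 0 (by norm_num) (by norm_num) (by rw [he]; ring)
          (iff_of_true (by norm_num) hcond)
      · exact key _ 1 0 (by norm_num) (by norm_num) (by rw [he]; ring)
          (iff_of_true (by norm_num) hcond)
      · exact key _ 0 1 (by norm_num) (by norm_num) (by rw [he]; ring)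
          (iff_of_true (by norm_num) hcond)
    next hcond =>
      simp only [Set.mem_insert_iff, Set.mem_singleton_iff] at hx
      rcases hx with rfl | rfl | rfl
      · exact key _ 1 1 (by norm_num) (by norm_num) (by rw [he]; ring)
          (iff_of_false (by norm_num) hcond)
      · exact key _ 0 2 (by norm_num) (by norm_num) (by rw [he]; ring)
          (iff_of_false (by norm_num) hcond)
      · exact key _ 1 2 (by norm_num) (by norm_num) (by rw [he]; ring)
          (iff_of_false (by norm_num) hcond)
  · intro n
    refine ⟨eF u q' n, ?_⟩
    unfold fF
    split
    · exact Or.inl rfl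
    · exact Or.inr rfl

lemma tileL : ∀ N : ℕ, ∀ a c : ℤ, 0 < a → 0 < c → a + c ≤ N →
    ∃ f : ℤ → Set ℤ, (∀ n, n ∈ f n) ∧ (∀ n x, x ∈ f n → f x = f n) ∧
      (∀ n, ∃ t : ℤ, f n = (fun s => t + s) '' ({0, a, a + c} : Set ℤ) ∨
                     f n = (fun s => t - s) '' ({0, a, a + c} : Set ℤ)) := by
  intro N
  induction N with
  | zero => intro a c ha hc hN; exfalso; omega
  | succ N ih =>
    intro a c ha hc hN
    by_cases hpa : a % 2 = 0 <;> by_cases hpc : c % 2 = 0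
    · -- both even : halve
      obtain ⟨f', hmem', hconst', hform'⟩ := ih (a / 2) (c / 2)
        (by omega) (by omega) (by omega)
      refine ⟨fun n => (fun m => 2 * m + n % 2) '' f' (n / 2), ?_, ?_, ?_⟩
      · intro n
        exact ⟨n / 2, hmem' (n / 2), by show 2 * (n / 2) + n % 2 = n; omega⟩
      · intro n x hx
        obtain ⟨m, hm, hxm⟩ := hx
        have hxm' : 2 * m + n % 2 = x := hxm
        have h1 : x % 2 = n % 2 := by omega
        have h2 : x / 2 = m := by omega
        show (fun m => 2 * m + x % 2) '' f' (x / 2) = (fun m => 2 * m + n % 2) '' f' (n / 2)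
        rw [h1, h2, hconst' (n / 2) m hm]
      · intro n
        obtain ⟨t, ht | ht⟩ := hform' (n / 2)
        · refine ⟨2 * t + n % 2, Or.inl ?_⟩
          show (fun m => 2 * m + n % 2) '' f' (n / 2) = _
          rw [ht, Set.image_image]
          ext m
          simp only [Set.image_insert_eq, Set.image_singleton, Set.mem_insert_iff,
            Set.mem_singleton_iff]
          omega
        · refine ⟨2 * t + n % 2, Or.inr ?_⟩
          show (fun m => 2 * m + n % 2) '' f' (n / 2) = _
          rw [ht, Set.image_image]
          ext m
          simp only [Set.image_insert_eq, Set.image_singleton, Set.mem_insert_iff,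
            Set.mem_singleton_iff]
          omega
    · -- a even, c odd : u = a + c, q' = a / 2
      obtain ⟨hmem, hconst, hform⟩ := master (a + c) (a / 2) (by omega) (by omega)
      refine ⟨fF (a + c) (a / 2), hmem, hconst, ?_⟩
      intro n
      obtain ⟨e, he | he⟩ := hform n
      · refine ⟨e, Or.inl ?_⟩
        rw [he]
        ext m
        simp only [Set.image_insert_eq, Set.image_singleton, Set.mem_insert_iff,
          Set.mem_singleton_iff]
        omega
      · refine ⟨e + (a + c) + 4 * (a / 2), Or.inr ?_⟩
        rw [he]
        ext m
        simp only [Set.image_insert_eq, Set.image_singleton, Set.mem_insert_iff,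
          Set.mem_singleton_iff]
        omega
    · -- a odd, c even : u = a + c, q' = c / 2
      obtain ⟨hmem, hconst, hform⟩ := master (a + c) (c / 2) (by omega) (by omega)
      refine ⟨fF (a + c) (c / 2), hmem, hconst, ?_⟩
      intro n
      obtain ⟨e, he | he⟩ := hform n
      · refine ⟨e + (a + c), Or.inr ?_⟩
        rw [he]
        ext m
        simp only [Set.image_insert_eq, Set.image_singleton, Set.mem_insert_iff,
          Set.mem_singleton_iff]
        omega
      · refine ⟨e + 4 * (c / 2), Or.inl ?_⟩
        rw [he]
        ext m
        simp only [Set.image_insert_eq, Set.image_singleton, Set.mem_insert_iff,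
          Set.mem_singleton_iff]
        omega
    · -- a odd, c odd : u = a, q' = (a + c) / 2
      obtain ⟨hmem, hconst, hform⟩ := master a ((a + c) / 2) (by omega) (by omega)
      refine ⟨fF a ((a + c) / 2), hmem, hconst, ?_⟩
      intro n
      obtain ⟨e, he | he⟩ := hform n
      · refine ⟨e, Or.inl ?_⟩
        rw [he]
        ext m
        simp only [Set.image_insert_eq, Set.image_singleton, Set.mem_insert_iff,
          Set.mem_singleton_iff]
        omega
      · refine ⟨e + a + 4 * ((a + c) / 2), Or.inr ?_⟩
        rw [he]
        ext m
        simp only [Set.image_insert_eq, Set.image_singleton, Set.mem_insert_iff,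
          Set.mem_singleton_iff]
        omega

/-- every 3-element set of integers tiles ℤ under translations and
reflections. -/
theorem stmt_18 (S : Set ℤ) (hS : S.ncard = 3) :
    ∃ P : Set (Set ℤ),
      P.PairwiseDisjoint id ∧
      ⋃₀ P = Set.univ ∧
      ∀ B ∈ P, ∃ t : ℤ,
        B = (fun s => t + s) '' S ∨ B = (fun s => t - s) '' S := by
  rw [Set.ncard_eq_three] at hS
  obtain ⟨x, y, z, hxy, hxz, hyz, rfl⟩ := hS
  obtain ⟨p, q, r, hpq, hqr, hset⟩ : ∃ p q r : ℤ, p < q ∧ q < r ∧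
      ({x, y, z} : Set ℤ) = {p, q, r} := by
    rcases lt_trichotomy x y with h1 | h1 | h1
    · rcases lt_trichotomy y z with h2 | h2 | h2
      · exact ⟨x, y, z, h1, h2, rfl⟩
      · exact absurd h2 hyz
      · rcases lt_trichotomy x z with h3 | h3 | h3
        · exact ⟨x, z, y, h3, h2, by ext m; simp; tauto⟩
        · exact absurd h3 hxz
        · exact ⟨z, x, y, h3, h1, by ext m; simp; tauto⟩
    · exact absurd h1 hxy
    · rcases lt_trichotomy x z with h2 | h2 | h2
      · exact ⟨y, x, z, h1, h2, by ext m; simp; tauto⟩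
      · exact absurd h2 hxz
      · rcases lt_trichotomy y z with h3 | h3 | h3
        · exact ⟨y, z, x, h3, h2, by ext m; simp; tauto⟩
        · exact absurd h3 hyz
        · exact ⟨z, y, x, h3, h1, by ext m; simp; tauto⟩
  rw [hset]
  obtain ⟨f, hmem, hconst, hform⟩ := tileL ((q - p) + (r - q)).toNat (q - p) (r - q)
    (by omega) (by omega) (by exact_mod_cast Int.self_le_toNat _)
  refine ⟨Set.range f, ?_, ?_, ?_⟩
  · rintro s ⟨n, rfl⟩ t ⟨m, rfl⟩ hst
    rw [Function.onFun, Set.disjoint_left]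
    intro w hwn hwm
    exact hst (by rw [← hconst n w hwn, hconst m w hwm])
  · ext m
    simp only [Set.mem_sUnion, Set.mem_univ, iff_true]
    exact ⟨f m, ⟨m, rfl⟩, hmem m⟩
  · rintro B ⟨n, rfl⟩
    obtain ⟨t, ht | ht⟩ := hform n
    · refine ⟨t - p, Or.inl ?_⟩
      rw [ht]
      ext m
      simp only [Set.image_insert_eq, Set.image_singleton, Set.mem_insert_iff,
        Set.mem_singleton_iff]
      omega
    · refine ⟨t + p, Or.inr ?_⟩
      rw [ht]
      ext m
      simp only [Set.image_insert_eq, Set.image_singleton, Set.mem_insert_iff,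
        Set.mem_singleton_iff]
      omega
end
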